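/- arXiv:1910.06721 — 8 statements merged into one kernel-verified Lean document; each statement's English description precedes it below -/
import Mathlib

section
/- Let G be a group and suppose there exists a natural number n such that every independent set of the power graph P(G) has at most n elements. Then the independence number of P(G) (the maximum size of an independent set) equals the clique cover number of P(G) (the minimum number of parts in a partition of the vertex set G into cliques). -/
/-- The power graph of a group `G`: distinct elements are adjacent iff one is a power
of the other. -/
def powerGraph (G : Type*) [Group G] : SimpleGraph G where
  Adj x y := x ≠ y ∧ (x ∈ Subgroup.zpowers y ∨ y ∈ Subgroup.zpowers x)
  symm := ⟨fun _ _ ⟨hne, h⟩ => ⟨hne.symm, h.symm⟩⟩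
  loopless := ⟨fun _ ⟨hne, _⟩ => hne rfl⟩
/-- An independent set of a simple graph: a set of pairwise non-adjacent vertices. -/
def SimpleGraph.IsIndependentSet {V : Type*} (G : SimpleGraph V) (s : Set V) : Prop :=
  s.Pairwise fun x y => ¬ G.Adj x y

/-!
The power graph of `G` is the comparability graph of the preorder `x ≼ y ↔ x ∈ ⟨y⟩`:
independent sets are antichains and cliques are chains. The theorem is therefore Dilworth's
theorem for a preorder of finite width.

For a finite set `s` of width `k` we follow Perles: let `C` be a chain of maximum size in `s`.
If `s \ C` has width `< k`, cover it by `k - 1` chains by induction and add `C`. Otherwise some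
antichain `A` of size `k` avoids `C`. By maximality of `A` every element of `s` lies below or
above `A`; the sets `D` below and `U` above `A` are proper subsets of `s`, since the top of `C`
is not in `D` and its bottom not in `U`. Each of the `k` chains covering `D` (resp. `U`) contains
exactly one point of `A` and lies below (resp. above) it, so the two covers glue along `A`.

Rado's selection principle (compactness) turns the covers of all finite subsets into a
colouring of the whole group by `k` chains.
-/

open Finset Function

section Dilworth

variable {α : Type*} {r : α → α → Prop}

structure IsChainCover (r : α → α → Prop) (s : Set α) (𝒞 : Finset (Set α)) : Prop where
  subset : ∀ C ∈ 𝒞, C ⊆ s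
  isChain : ∀ C ∈ 𝒞, IsChain r C
  cover : s ⊆ ⋃ C ∈ 𝒞, C

structure IsMaxCardChain (r : α → α → Prop) (s C : Finset α) : Prop where
  subset : C ⊆ s
  isChain : IsChain r (C : Set α)
  card_le : ∀ D ⊆ s, IsChain r (D : Set α) → #D ≤ #C

lemma IsChain.exists_forall_rel [Std.Refl r] [IsTrans α r] {s : Finset α}
    (hs : IsChain r (s : Set α)) (hne : s.Nonempty) : ∃ m ∈ s, ∀ x ∈ s, r x m := by
  have : Nonempty (s : Set α) := hne.to_set.to_subtype
  obtain ⟨m, hm⟩ := (directedOn_iff_directed.mp hs.directedOn).finset_le univ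
  exact ⟨m, m.2, fun x hx => hm ⟨x, hx⟩ (mem_univ _)⟩

lemma IsAntichain.rel_of_mem_isChain [Std.Refl r] [IsTrans α r] {A C : Set α}
    (hA : IsAntichain r A) (hC : IsChain r C) {a : α} (haA : a ∈ A) (haC : a ∈ C)
    (hbelow : ∀ x ∈ C, ∃ b ∈ A, r x b) {x : α} (hx : x ∈ C) : r x a := by
  obtain ⟨b, hbA, hxb⟩ := hbelow x hx
  rcases hC.total hx haC with hxa | hax
  · exact hxa
  · obtain rfl : a = b := hA.eq haA hbA (_root_.trans hax hxb)
    exact hxb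

lemma IsAntichain.exists_eq_of_card_le {A : Finset α} (hA : IsAntichain r (A : Set α))
    {𝒞 : Finset (Set α)} (h𝒞 : ∀ C ∈ 𝒞, IsChain r C) (hcard : #𝒞 ≤ #A) {f : α → Set α}
    (hf : ∀ a ∈ A, f a ∈ 𝒞 ∧ a ∈ f a) {C : Set α} (hC : C ∈ 𝒞) : ∃ a ∈ A, f a = C := by
  classical
  have hinj : Set.InjOn f A := fun a ha b hb hab =>
    inter_subsingleton_of_isChain_of_isAntichain (h𝒞 _ (hf a ha).1) hA
      ⟨(hf a ha).2, ha⟩ ⟨hab ▸ (hf b hb).2, hb⟩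
  have himage : A.image f = 𝒞 := eq_of_subset_of_card_le
    (image_subset_iff.2 fun a ha => (hf a ha).1) (by rwa [card_image_of_injOn hinj])
  rw [← himage] at hC
  simpa using hC

lemma IsAntichain.exists_rel_or_rel [Std.Refl r] {s A : Finset α} (hAs : A ⊆ s)
    (hA : IsAntichain r (A : Set α)) (hs : ∀ t ⊆ s, IsAntichain r (t : Set α) → #t ≤ #A)
    {x : α} (hx : x ∈ s) : (∃ a ∈ A, r x a) ∨ ∃ a ∈ A, r a x := by
  classical
  by_contra! h
  have hxA : x ∉ A := fun hxA => h.1 x hxA (refl x)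
  have hxA' : IsAntichain r ((insert x A : Finset α) : Set α) := by
    rw [coe_insert]
    exact hA.insert (fun b hb _ => h.2 b hb) (fun b hb _ => h.1 b hb)
  have := hs _ (insert_subset hx hAs) hxA'
  rw [card_insert_of_notMem hxA] at this
  omega

lemma exists_isMaxCardChain (r : α → α → Prop) (s : Finset α) : ∃ C, IsMaxCardChain r s C := by
  classical
  obtain ⟨C, hC, hmax⟩ :=
    exists_max_image (s.powerset.filter fun C : Finset α => IsChain r (C : Set α)) card ⟨∅, by simp⟩
  simp only [mem_filter, mem_powerset] at hC hmax
  exact ⟨C, hC.1, hC.2, fun D hD hDc => hmax D ⟨hD, hDc⟩⟩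

namespace IsMaxCardChain

variable {s C A : Finset α}

lemma swap (hC : IsMaxCardChain r s C) : IsMaxCardChain (swap r) s C :=
  ⟨hC.subset, hC.isChain.symm, fun D hD hDc => hC.card_le D hD hDc.symm⟩

lemma nonempty (hC : IsMaxCardChain r s C) (hs : s.Nonempty) : C.Nonempty := by
  obtain ⟨x, hx⟩ := hs
  simpa using hC.card_le {x} (singleton_subset_iff.2 hx) (by simp)

lemma not_rel_of_forall_rel [IsTrans α r] (hC : IsMaxCardChain r s C) {m a : α}
    (hm : ∀ x ∈ C, r x m) (ha : a ∈ s) (haC : a ∉ C) : ¬ r m a := by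
  classical
  intro hma
  have hchain : IsChain r ((insert a C : Finset α) : Set α) := by
    rw [coe_insert]
    exact hC.isChain.insert fun x hx _ => Or.inr (_root_.trans (hm x hx) hma)
  have := hC.card_le _ (insert_subset ha hC.subset) hchain
  rw [card_insert_of_notMem haC] at this
  omega

lemma filter_exists_rel_ssubset [Std.Refl r] [IsTrans α r]
    [DecidablePred fun x => ∃ a ∈ A, r x a] (hC : IsMaxCardChain r s C) (hCne : C.Nonempty)
    (hAs : A ⊆ s) (hAC : Disjoint A C) : s.filter (fun x => ∃ a ∈ A, r x a) ⊂ s := by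
  obtain ⟨m, hmC, hm⟩ := hC.isChain.exists_forall_rel hCne
  refine filter_ssubset.2 ⟨m, hC.subset hmC, fun ⟨a, ha, hma⟩ => ?_⟩
  exact hC.not_rel_of_forall_rel hm (hAs ha) (disjoint_left.1 hAC ha) hma

end IsMaxCardChain

namespace IsChainCover

variable {s : Set α} {𝒞 : Finset (Set α)}

lemma swap (h : IsChainCover r s 𝒞) : IsChainCover (swap r) s 𝒞 :=
  ⟨h.subset, fun C hC => (h.isChain C hC).symm, h.cover⟩

lemma exists_mem (h : IsChainCover r s 𝒞) {x : α} (hx : x ∈ s) : ∃ C ∈ 𝒞, x ∈ C := by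
  simpa using h.cover hx

lemma insert_sdiff {C : Set α} (h : IsChainCover r (s \ C) 𝒞) (hCs : C ⊆ s)
    (hC : IsChain r C) : IsChainCover r s (insert C 𝒞) where
  subset D hD := (mem_insert.1 hD).elim (· ▸ hCs) fun hD => (h.subset D hD).trans Set.sdiff_subset
  isChain D hD := (mem_insert.1 hD).elim (· ▸ hC) (h.isChain D)
  cover x hx := by
    by_cases hxC : x ∈ C
    · exact Set.mem_biUnion (mem_insert_self C 𝒞) hxC
    · obtain ⟨D, hD, hxD⟩ := h.exists_mem ⟨hx, hxC⟩
      exact Set.mem_biUnion (mem_insert_of_mem hD) hxD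

lemma exists_forall_rel_of_card_le [Std.Refl r] [IsTrans α r] (h : IsChainCover r s 𝒞)
    {A : Finset α} (hA : IsAntichain r (A : Set α)) (hcard : #𝒞 ≤ #A) (hAs : ↑A ⊆ s)
    (hs : ∀ x ∈ s, ∃ a ∈ A, r x a) :
    ∃ P : α → Set α, (∀ a ∈ A, P a ⊆ s ∧ IsChain r (P a) ∧ ∀ x ∈ P a, r x a) ∧
      s ⊆ ⋃ a ∈ A, P a := by
  choose! P hP𝒞 haP using fun a (ha : a ∈ A) => h.exists_mem (hAs ha)
  refine ⟨P, fun a ha => ⟨h.subset _ (hP𝒞 a ha), h.isChain _ (hP𝒞 a ha), fun x hx => ?_⟩,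
    fun x hx => ?_⟩
  · exact hA.rel_of_mem_isChain (h.isChain _ (hP𝒞 a ha)) ha (haP a ha)
      (fun y hy => hs y (h.subset _ (hP𝒞 a ha) hy)) hx
  · obtain ⟨Q, hQ, hxQ⟩ := h.exists_mem hx
    obtain ⟨a, ha, rfl⟩ :=
      hA.exists_eq_of_card_le h.isChain hcard (fun a ha => ⟨hP𝒞 a ha, haP a ha⟩) hQ
    exact Set.mem_biUnion ha hxQ

lemma exists_fin_coloring [Std.Refl r] {s : Finset α} (h : IsChainCover r s 𝒞) {k : ℕ}
    (hk : #𝒞 ≤ k) : ∃ c : s → Fin k, ∀ x y, c x = c y → r x y ∨ r y x := by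
  have hcov (x : s) : ∃ C : 𝒞, (x : α) ∈ (C : Set α) := by simpa using h.cover x.2
  choose C hC using hcov
  let e : 𝒞 ↪ Fin k := 𝒞.equivFin.toEmbedding.trans (Fin.castLEEmb hk)
  refine ⟨fun x => e (C x), fun x y hxy => ?_⟩
  have hCxy : C x = C y := e.injective hxy
  exact (h.isChain _ (C y).2).total (hCxy ▸ hC x) (hC y)

end IsChainCover

lemma IsMaxCardChain.exists_chainCover_of_isAntichain [Std.Refl r] [IsTrans α r]
    {s C A : Finset α} (hC : IsMaxCardChain r s C) (hCne : C.Nonempty) (hAs : A ⊆ s)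
    (hAC : Disjoint A C) (hA : IsAntichain r (A : Set α))
    (hs : ∀ t ⊆ s, IsAntichain r (t : Set α) → #t ≤ #A)
    (ih : ∀ t ⊂ s, ∃ 𝒞 : Finset (Set α), #𝒞 ≤ #A ∧ IsChainCover r t 𝒞) :
    ∃ 𝒞 : Finset (Set α), #𝒞 ≤ #A ∧ IsChainCover r s 𝒞 := by
  classical
  set D := s.filter fun x => ∃ a ∈ A, r x a
  set U := s.filter fun x => ∃ a ∈ A, r a x
  obtain ⟨𝒟, h𝒟card, h𝒟⟩ := ih D (hC.filter_exists_rel_ssubset hCne hAs hAC)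
  obtain ⟨𝒰, h𝒰card, h𝒰⟩ := ih U (hC.swap.filter_exists_rel_ssubset hCne hAs hAC)
  obtain ⟨P, hP, hDP⟩ := h𝒟.exists_forall_rel_of_card_le hA h𝒟card
    (fun a ha => mem_filter.2 ⟨hAs ha, a, ha, refl a⟩) (fun x hx => (mem_filter.1 hx).2)
  obtain ⟨Q, hQ, hUQ⟩ := h𝒰.swap.exists_forall_rel_of_card_le hA.swap h𝒰card
    (fun a ha => mem_filter.2 ⟨hAs ha, a, ha, refl a⟩) (fun x hx => (mem_filter.1 hx).2)
  have hPQ (a : α) (ha : a ∈ A) : P a ∪ Q a ⊆ s ∧ IsChain r (P a ∪ Q a) := by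
    obtain ⟨hPD, hPc, hPa⟩ := hP a ha
    obtain ⟨hQU, hQc, hQa⟩ := hQ a ha
    refine ⟨Set.union_subset (hPD.trans (coe_subset.2 (filter_subset _ _)))
      (hQU.trans (coe_subset.2 (filter_subset _ _))), isChain_union.2 ⟨hPc, hQc.symm, ?_⟩⟩
    exact fun x hx y hy _ => Or.inl (_root_.trans (hPa x hx) (hQa y hy))
  have hcover : ↑s ⊆ ⋃ a ∈ A, P a ∪ Q a := fun x hx => by
    rcases hA.exists_rel_or_rel hAs hs hx with hxD | hxU
    · obtain ⟨a, ha, hxa⟩ := Set.mem_iUnion₂.1 (hDP (mem_filter.2 ⟨hx, hxD⟩))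
      exact Set.mem_biUnion ha (Or.inl hxa)
    · obtain ⟨a, ha, hxa⟩ := Set.mem_iUnion₂.1 (hUQ (mem_filter.2 ⟨hx, hxU⟩))
      exact Set.mem_biUnion ha (Or.inr hxa)
  refine ⟨A.image fun a => P a ∪ Q a, card_image_le, ⟨?_, ?_, ?_⟩⟩
  · simpa using fun a ha => (hPQ a ha).1
  · simpa using fun a ha => (hPQ a ha).2
  · simpa using hcover

theorem exists_chainCover [Std.Refl r] [IsTrans α r] (s : Finset α) (k : ℕ)
    (hs : ∀ t ⊆ s, IsAntichain r (t : Set α) → #t ≤ k) :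
    ∃ 𝒞 : Finset (Set α), #𝒞 ≤ k ∧ IsChainCover r s 𝒞 := by
  classical
  induction s using Finset.strongInduction generalizing k with
  | H s ih =>
  obtain rfl | hsne := s.eq_empty_or_nonempty
  · exact ⟨∅, by simp, ⟨by simp, by simp, by simp⟩⟩
  obtain ⟨C, hC⟩ := exists_isMaxCardChain r s
  have hCne := hC.nonempty hsne
  by_cases hA : ∃ A ⊆ s \ C, IsAntichain r (A : Set α) ∧ #A = k
  · obtain ⟨A, hAC, hA, rfl⟩ := hA
    obtain ⟨hAs, hAC⟩ := subset_sdiff.1 hAC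
    exact hC.exists_chainCover_of_isAntichain hCne hAs hAC hA hs
      fun t ht => ih t ht #A fun u hu => hs u (hu.trans ht.subset)
  · push Not at hA
    obtain ⟨x, hx⟩ := hsne
    have hk : 1 ≤ k := by simpa using hs {x} (singleton_subset_iff.2 hx) (by simp)
    obtain ⟨𝒞, h𝒞card, h𝒞⟩ := ih (s \ C) (sdiff_ssubset hC.subset hCne) (k - 1) fun t ht htA =>
      Nat.le_sub_one_of_lt ((hs t (ht.trans sdiff_subset) htA).lt_of_ne (hA t ht htA))
    refine ⟨insert ↑C 𝒞, (card_insert_le _ _).trans (by omega), ?_⟩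
    exact (coe_sdiff s C ▸ h𝒞).insert_sdiff (coe_subset.2 hC.subset) hC.isChain

theorem exists_chain_coloring [Std.Refl r] [IsTrans α r] {k : ℕ}
    (h : ∀ t : Finset α, IsAntichain r (t : Set α) → #t ≤ k) :
    ∃ c : α → Fin k, ∀ x y, c x = c y → r x y ∨ r y x := by
  classical
  have hcol (s : Finset α) : ∃ c : s → Fin k, ∀ x y, c x = c y → r x y ∨ r y x := by
    obtain ⟨𝒞, hcard, h𝒞⟩ := exists_chainCover s k fun t _ ht => h t ht
    exact h𝒞.exists_fin_coloring hcard
  choose g hg using hcol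
  obtain ⟨c, hc⟩ := Finset.rado_selection_subtype (β := fun _ => Fin k) g
  refine ⟨c, fun x y hxy => ?_⟩
  obtain ⟨t, hst, ht⟩ := hc {x, y}
  have hx := ht ⟨x, by simp⟩
  have hy := ht ⟨y, by simp⟩
  exact hg t _ _ (hx.symm.trans (hxy.trans hy))

end Dilworth

lemma SimpleGraph.IsIndependentSet.card_le_of_isClique_preimage {V : Type*} {G : SimpleGraph V}
    {S : Finset V} (hS : G.IsIndependentSet S) {m : ℕ} (c : V → Fin m)
    (hc : ∀ i, G.IsClique (c ⁻¹' {i})) : #S ≤ m := by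
  have hinj : Set.InjOn c S := fun x hx y hy hxy => by
    by_contra hne
    exact hS hx hy hne (hc (c x) rfl hxy.symm hne)
  simpa using card_le_card_of_injOn c (fun _ _ => mem_univ _) hinj

section PowerGraph

variable {G : Type*} [Group G]

instance : Std.Refl fun x y : G => x ∈ Subgroup.zpowers y := ⟨Subgroup.mem_zpowers⟩

instance : IsTrans G fun x y : G => x ∈ Subgroup.zpowers y :=
  ⟨fun _ _ _ hxy hyz => Subgroup.zpowers_le.2 hyz hxy⟩

lemma powerGraph_isIndependentSet_iff {s : Set G} :
    (powerGraph G).IsIndependentSet s ↔ IsAntichain (fun x y : G => x ∈ Subgroup.zpowers y) s :=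
  ⟨fun h _ hx _ hy hxy hr => h hx hy hxy ⟨hxy, Or.inl hr⟩,
    fun h _ hx _ hy hxy hadj => hadj.2.elim (h hx hy hxy) (h hy hx hxy.symm)⟩

lemma powerGraph_isClique_iff {s : Set G} :
    (powerGraph G).IsClique s ↔ IsChain (fun x y : G => x ∈ Subgroup.zpowers y) s :=
  ⟨fun h _ hx _ hy hxy => (h hx hy hxy).2, fun h _ hx _ hy hxy => ⟨hxy, h hx hy hxy⟩⟩

end PowerGraph

/-- If every independent set of the power graph of `G` has at most `n` elements, then
the independence number of `P(G)` equals its clique cover number: some `k` is both the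
largest size of an independent set and the least number of cliques partitioning `G`. -/
theorem power_graph_independence_eq_clique_cover
    (G : Type*) [Group G] (n : ℕ)
    (hn : ∀ S : Finset G, (powerGraph G).IsIndependentSet ↑S → S.card ≤ n) :
    ∃ k : ℕ,
      IsGreatest {m | ∃ S : Finset G, (powerGraph G).IsIndependentSet ↑S ∧ S.card = m} k ∧
      IsLeast {m | ∃ c : G → Fin m, ∀ i : Fin m, (powerGraph G).IsClique (c ⁻¹' {i})} k := by
  obtain ⟨k, hk⟩ := BddAbove.exists_isGreatest_of_nonempty
    (S := {m | ∃ S : Finset G, (powerGraph G).IsIndependentSet ↑S ∧ S.card = m})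
    ⟨n, by rintro _ ⟨S, hS, rfl⟩; exact hn S hS⟩
    ⟨0, ∅, by simp [SimpleGraph.IsIndependentSet], rfl⟩
  obtain ⟨c, hc⟩ := exists_chain_coloring (r := fun x y : G => x ∈ Subgroup.zpowers y)
    fun t ht => hk.2 ⟨t, powerGraph_isIndependentSet_iff.2 ht, rfl⟩
  refine ⟨k, hk, ⟨c, fun i => powerGraph_isClique_iff.2 fun x hx y hy _ => ?_⟩, ?_⟩
  · exact hc x y (hx.trans hy.symm)
  · rintro m ⟨c', hc'⟩
    obtain ⟨S, hS, rfl⟩ := hk.1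
    exact hS.card_le_of_isClique_preimage c' hc'
end

section
/- Let p be a prime and H a finite group with p not dividing |H|. Then the independence number of the power graph P(C_{p^∞} × H) equals the number of cyclic subgroups of H. -/
/-- The Prüfer `p`-group `C_{p^∞}`, as the `p`-primary component of `ℚ/ℤ`. -/
abbrev PruferGroup (p : ℕ) [Fact p.Prime] : AddSubgroup (ℚ ⧸ AddSubgroup.zmultiples (1 : ℚ)) :=
  AddCommGroup.primaryComponent (ℚ ⧸ AddSubgroup.zmultiples (1 : ℚ)) p

/-!
Two facts about `C_{p^∞} × H` drive the count. The cyclic subgroups of `C_{p^∞}` form a chain,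
and since orders in `C_{p^∞}` are coprime to orders in `H`, the Chinese remainder theorem shows
that `(a, h)` is a power of `(b, k)` exactly when `a` is a power of `b` and `h` a power of `k`.
Hence two elements of an independent set generate different cyclic subgroups of `H` in their
second coordinates. Conversely, pairing a generator of each cyclic `K ≤ H` with an element of
order `p ^ (|H| - |K|)` reverses inclusions between the `K`, so these pairs are independent.
-/

namespace AddCircle

variable {𝕜 : Type*} [Field 𝕜] [LinearOrder 𝕜] [IsStrictOrderedRing 𝕜] {p : 𝕜} [Fact (0 < p)]

theorem mem_zmultiples_period_div_of_nsmul_eq_zero {n : ℕ} (hn : 0 < n) {x : AddCircle p}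
    (hx : n • x = 0) : x ∈ AddSubgroup.zmultiples ((p / n : 𝕜) : AddCircle p) := by
  obtain ⟨m, -, rfl⟩ := (AddCircle.nsmul_eq_zero_iff hn).1 hx
  rw [natCast_div_mul_eq_nsmul]
  exact AddSubgroup.nsmul_mem_zmultiples _ m

theorem mem_zmultiples_of_addOrderOf_dvd {x y : AddCircle p} (hy : IsOfFinAddOrder y)
    (hxy : addOrderOf x ∣ addOrderOf y) : x ∈ AddSubgroup.zmultiples y := by
  set n := addOrderOf y
  have hn : 0 < n := hy.addOrderOf_pos
  have hle : AddSubgroup.zmultiples y ≤ AddSubgroup.zmultiples ((p / n : 𝕜) : AddCircle p) :=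
    AddSubgroup.zmultiples_le.2
      (mem_zmultiples_period_div_of_nsmul_eq_zero hn (addOrderOf_nsmul_eq_zero y))
  have hord : addOrderOf ((p / n : 𝕜) : AddCircle p) = n := addOrderOf_period_div hn
  have : Finite (AddSubgroup.zmultiples ((p / n : 𝕜) : AddCircle p)) :=
    (addOrderOf_pos_iff.1 (by rw [hord]; exact hn)).finite_zmultiples.to_subtype
  have heq := AddSubgroup.eq_of_le_of_card_ge hle (by
    rw [Nat.card_zmultiples, Nat.card_zmultiples, hord])
  rw [heq]
  exact mem_zmultiples_period_div_of_nsmul_eq_zero hn (addOrderOf_dvd_iff_nsmul_eq_zero.1 hxy)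

end AddCircle

namespace Prod

variable {G₁ G₂ : Type*} [Group G₁] [Group G₂]

theorem zpowers_le_prod (x : G₁ × G₂) :
    Subgroup.zpowers x ≤ (Subgroup.zpowers x.1).prod (Subgroup.zpowers x.2) :=
  Subgroup.zpowers_le.2 ⟨Subgroup.mem_zpowers x.1, Subgroup.mem_zpowers x.2⟩

theorem zpowers_eq_prod_of_coprime (x : G₁ × G₂) (hx : (orderOf x.1).Coprime (orderOf x.2)) :
    Subgroup.zpowers x = (Subgroup.zpowers x.1).prod (Subgroup.zpowers x.2) := by
  refine le_antisymm (zpowers_le_prod x) ?_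
  rintro y hy
  obtain ⟨⟨i, hi⟩, ⟨j, hj⟩⟩ := And.imp Subgroup.mem_zpowers_iff.1 Subgroup.mem_zpowers_iff.1
    (Subgroup.mem_prod.1 hy)
  obtain ⟨u, v, huv⟩ : IsCoprime (orderOf x.1 : ℤ) (orderOf x.2 : ℤ) :=
    Int.isCoprime_iff_gcd_eq_one.2 hx
  -- `n ≡ i` modulo `orderOf x.1` and `n ≡ j` modulo `orderOf x.2`
  let n : ℤ := i * (v * orderOf x.2) + j * (u * orderOf x.1)
  have h₁ : x.1 ^ n = x.1 ^ i := (orderOf_dvd_sub_iff_zpow_eq_zpow).1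
    ⟨u * (j - i), by linear_combination i * huv⟩
  have h₂ : x.2 ^ n = x.2 ^ j := (orderOf_dvd_sub_iff_zpow_eq_zpow).1
    ⟨v * (i - j), by linear_combination j * huv⟩
  exact ⟨n, Prod.ext (h₁.trans hi) (h₂.trans hj)⟩

end Prod

namespace PruferGroup

variable {p : ℕ} [Fact p.Prime]

theorem orderOf_eq_addOrderOf_coe (x : Multiplicative (PruferGroup p)) :
    orderOf x = addOrderOf (x.toAdd : AddCircle (1 : ℚ)) := by
  rw [AddSubgroup.addOrderOf_coe]
  exact orderOf_ofAdd_eq_addOrderOf x.toAdd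

theorem exists_orderOf_eq_pow (x : Multiplicative (PruferGroup p)) :
    ∃ n, orderOf x = p ^ n := by
  rw [orderOf_eq_addOrderOf_coe]
  exact AddCommGroup.mem_primaryComponent_iff_addOrderOf.1 x.toAdd.2

theorem exists_orderOf_eq (n : ℕ) : ∃ x : Multiplicative (PruferGroup p), orderOf x = p ^ n := by
  have hpn : 0 < p ^ n := pow_pos (Fact.out : p.Prime).pos n
  have h : addOrderOf (((1 : ℚ) / (p ^ n : ℕ) : ℚ) : AddCircle (1 : ℚ)) = p ^ n :=
    AddCircle.addOrderOf_period_div hpn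
  refine ⟨.ofAdd ⟨_, AddCommGroup.mem_primaryComponent_iff_addOrderOf.2 ⟨n, h⟩⟩, ?_⟩
  rw [orderOf_eq_addOrderOf_coe]
  exact h

theorem coprime_orderOf_of_not_dvd (x : Multiplicative (PruferGroup p)) {m : ℕ} (hm : ¬ p ∣ m) :
    (orderOf x).Coprime m := by
  obtain ⟨n, hn⟩ := exists_orderOf_eq_pow x
  rw [hn]
  exact ((Fact.out : p.Prime).coprime_iff_not_dvd.2 hm).pow_left n

theorem mem_zpowers_of_orderOf_dvd {x y : Multiplicative (PruferGroup p)}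
    (h : orderOf x ∣ orderOf y) : x ∈ Subgroup.zpowers y := by
  obtain ⟨n, hn⟩ := exists_orderOf_eq_pow y
  simp only [orderOf_eq_addOrderOf_coe] at h hn
  have hy : IsOfFinAddOrder (y.toAdd : AddCircle (1 : ℚ)) := by
    rw [← addOrderOf_pos_iff, hn]
    exact pow_pos (Fact.out : p.Prime).pos n
  obtain ⟨k, hk⟩ := AddCircle.mem_zmultiples_of_addOrderOf_dvd hy h
  exact ⟨k, Multiplicative.toAdd.injective (Subtype.ext hk)⟩

theorem mem_zpowers_or_mem_zpowers (x y : Multiplicative (PruferGroup p)) :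
    x ∈ Subgroup.zpowers y ∨ y ∈ Subgroup.zpowers x := by
  obtain ⟨a, ha⟩ := exists_orderOf_eq_pow x
  obtain ⟨b, hb⟩ := exists_orderOf_eq_pow y
  rcases le_total a b with hab | hab
  · exact .inl (mem_zpowers_of_orderOf_dvd (ha ▸ hb ▸ pow_dvd_pow p hab))
  · exact .inr (mem_zpowers_of_orderOf_dvd (ha ▸ hb ▸ pow_dvd_pow p hab))

end PruferGroup

section PowerGraphProd

variable {P H : Type*} [Group P] [Group H] [Finite H]

theorem card_le_of_isIndependentSet_powerGraph_prod
    (hchain : ∀ x y : P, x ∈ Subgroup.zpowers y ∨ y ∈ Subgroup.zpowers x)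
    (hcop : ∀ (x : P) (h : H), (orderOf x).Coprime (orderOf h))
    {S : Finset (P × H)} (hS : (powerGraph (P × H)).IsIndependentSet S) :
    S.card ≤ Nat.card {K : Subgroup H // IsCyclic K} := by
  let F : S → {K : Subgroup H // IsCyclic K} := fun x => ⟨Subgroup.zpowers x.1.2, inferInstance⟩
  have hF : Function.Injective F := by
    rintro ⟨x, hx⟩ ⟨y, hy⟩ hxy
    rw [Subtype.mk.injEq]
    have hzp : Subgroup.zpowers x.2 = Subgroup.zpowers y.2 := congrArg Subtype.val hxy
    have hx₂ : x.2 ∈ Subgroup.zpowers y.2 := hzp ▸ Subgroup.mem_zpowers x.2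
    have hy₂ : y.2 ∈ Subgroup.zpowers x.2 := hzp ▸ Subgroup.mem_zpowers y.2
    by_contra hne
    refine hS hx hy hne ⟨hne, ?_⟩
    rw [Prod.zpowers_eq_prod_of_coprime y (hcop _ _), Prod.zpowers_eq_prod_of_coprime x (hcop _ _),
      Subgroup.mem_prod, Subgroup.mem_prod]
    exact (hchain x.1 y.1).imp (⟨·, hx₂⟩) (⟨·, hy₂⟩)
  calc S.card = Nat.card S := (Nat.card_eq_finsetCard S).symm
    _ ≤ _ := Nat.card_le_card_of_injective F hF

theorem exists_isIndependentSet_powerGraph_prod_card_eq {p : ℕ} (hp : 1 < p)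
    (hP : ∀ n : ℕ, ∃ x : P, orderOf x = p ^ n) :
    ∃ S : Finset (P × H), (powerGraph (P × H)).IsIndependentSet S ∧
      S.card = Nat.card {K : Subgroup H // IsCyclic K} := by
  have : Fintype {K : Subgroup H // IsCyclic K} := Fintype.ofFinite _
  choose g hg using fun K : {K : Subgroup H // IsCyclic K} =>
    (K.1.isCyclic_iff_exists_zpowers_eq_top).1 K.2
  choose a ha using fun K : {K : Subgroup H // IsCyclic K} => hP (Nat.card H - Nat.card K.1)
  let f K := (a K, g K)
  have hf : ∀ K K', f K ∈ Subgroup.zpowers (f K') → K = K' := by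
    intro K K' hKK'
    obtain ⟨hmem₁, hmem₂⟩ := Subgroup.mem_prod.1 (Prod.zpowers_le_prod _ hKK')
    have hle : K.1 ≤ K'.1 := hg K ▸ hg K' ▸ Subgroup.zpowers_le.2 hmem₂
    have hdvd := orderOf_dvd_of_mem_zpowers hmem₁
    rw [ha, ha, Nat.pow_dvd_pow_iff_le_right hp] at hdvd
    have := Subgroup.card_le_of_le hle
    have := K'.1.card_le_card_group
    exact Subtype.ext (Subgroup.eq_of_le_of_card_ge hle (by omega))
  have hinj : Function.Injective f := fun K K' h => hf K K' (h ▸ Subgroup.mem_zpowers _)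
  refine ⟨Finset.univ.map ⟨f, hinj⟩, ?_, by simp [Nat.card_eq_fintype_card]⟩
  simp only [Finset.coe_map, Finset.coe_univ, Set.image_univ]
  rintro _ ⟨K, rfl⟩ _ ⟨K', rfl⟩ hne ⟨-, h | h⟩
  · exact hne (congrArg f (hf K K' h))
  · exact hne (congrArg f (hf K' K h).symm)

end PowerGraphProd

/-- For a prime `p` and finite group `H` with `p ∤ |H|`, the independence number of the
power graph of `C_{p^∞} × H` equals the number of cyclic subgroups of `H`. -/
theorem power_graph_prufer_prod_independence_number
    (p : ℕ) [Fact p.Prime] (H : Type*) [Group H] [Fintype H]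
    (hpH : ¬ p ∣ Fintype.card H) :
    IsGreatest
      {m | ∃ S : Finset (Multiplicative ↥(PruferGroup p) × H),
        (powerGraph (Multiplicative ↥(PruferGroup p) × H)).IsIndependentSet ↑S ∧ S.card = m}
      (Nat.card {K : Subgroup H // IsCyclic ↥K}) := by
  refine ⟨exists_isIndependentSet_powerGraph_prod_card_eq (Fact.out : p.Prime).one_lt
    PruferGroup.exists_orderOf_eq, ?_⟩
  rintro m ⟨S, hS, rfl⟩
  exact card_le_of_isIndependentSet_powerGraph_prod PruferGroup.mem_zpowers_or_mem_zpowers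
    (fun x h => PruferGroup.coprime_orderOf_of_not_dvd x fun hdvd =>
      hpH (hdvd.trans orderOf_dvd_card)) hS
end

section
/- Let G be a cyclic group of order pq where p and q are distinct primes. Then the subgraph of the power graph P(G) induced on the set of elements that are neither the identity nor generators of G is disconnected; it is the disjoint union of a complete graph on the p−1 elements of order p and a complete graph on the q−1 elements of order q, with no edges between them. -/
/-!
The non-identity non-generators of a cyclic group of order `p * q` are exactly the elements of
order `p` or `q`, and there are `φ p = p - 1`, resp. `φ q = q - 1`, of them. In a finite cyclic
group an element lies in the subgroup generated by any element whose order its own order divides,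
so elements of equal order are adjacent; conversely adjacent elements have orders dividing one
another, which for the primes `p ≠ q` forces equal orders. Hence the order is constant along
walks of the induced subgraph, which therefore cannot connect an element of order `p` to one of
order `q`.
-/

open Subgroup

lemma Nat.eq_or_eq_of_dvd_mul_of_prime {p q n : ℕ} (hp : p.Prime) (hq : q.Prime)
    (hn : n ∣ p * q) (hn1 : n ≠ 1) (hnpq : n ≠ p * q) : n = p ∨ n = q := by
  obtain ⟨a, b, ha, hb, rfl⟩ := Nat.dvd_mul.mp hn
  rcases (Nat.dvd_prime hp).mp ha with rfl | rfl <;>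
    rcases (Nat.dvd_prime hq).mp hb with rfl | rfl <;> simp_all

lemma SimpleGraph.Reachable.eq_of_forall_adj_eq {V α : Type*} {Γ : SimpleGraph V} (f : V → α)
    (hf : ∀ u v, Γ.Adj u v → f u = f v) {u v : V} (h : Γ.Reachable u v) : f u = f v := by
  replace h := (SimpleGraph.reachable_iff_reflTransGen u v).mp h
  induction h with
  | refl => rfl
  | tail _ hadj ih => exact ih.trans (hf _ _ hadj)

section Group

variable {G : Type*} [Group G]

lemma ne_one_and_zpowers_ne_top_iff [Finite G] {g : G} :
    g ≠ 1 ∧ zpowers g ≠ ⊤ ↔ orderOf g ≠ 1 ∧ orderOf g ≠ Nat.card G := by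
  rw [Ne, Ne, ← orderOf_eq_one_iff, ← card_eq_iff_eq_top, Nat.card_zpowers]

lemma ne_one_and_zpowers_ne_top_iff_of_card_eq_mul [Finite G] {p q : ℕ} (hp : p.Prime)
    (hq : q.Prime) (hcard : Nat.card G = p * q) {g : G} :
    g ≠ 1 ∧ zpowers g ≠ ⊤ ↔ orderOf g = p ∨ orderOf g = q := by
  rw [ne_one_and_zpowers_ne_top_iff, hcard]
  refine ⟨fun h ↦ Nat.eq_or_eq_of_dvd_mul_of_prime hp hq (hcard ▸ orderOf_dvd_natCard g) h.1 h.2,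
    ?_⟩
  rintro (h | h) <;> rw [h]
  · exact ⟨hp.ne_one, (lt_mul_of_one_lt_right hp.pos hq.one_lt).ne⟩
  · exact ⟨hq.ne_one, (lt_mul_of_one_lt_left hq.pos hp.one_lt).ne⟩

lemma IsCyclic.mem_zpowers_of_orderOf_dvd [Fintype G] [IsCyclic G] {g h : G}
    (hd : orderOf h ∣ orderOf g) : h ∈ zpowers g := by
  classical
  -- `x ^ orderOf g = 1` has at most `orderOf g` solutions, and `zpowers g` already supplies them all.
  let roots : Finset G := {x | x ^ orderOf g = 1}
  have hsub : (zpowers g : Set G).toFinset ⊆ roots := fun x hx ↦ by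
    simpa [roots, ← orderOf_dvd_iff_pow_eq_one] using
      orderOf_dvd_of_mem_zpowers (Set.mem_toFinset.mp hx)
  have hcard : roots.card ≤ (zpowers g : Set G).toFinset.card := by
    rw [Set.toFinset_card, ← Nat.card_eq_fintype_card, SetLike.coe_sort_coe, Nat.card_zpowers]
    exact IsCyclic.card_pow_eq_one_le (orderOf_pos g)
  have hroot : h ∈ roots := by simpa [roots] using orderOf_dvd_iff_pow_eq_one.mp hd
  rw [← Finset.eq_of_subset_of_card_le hsub hcard] at hroot
  simpa using hroot

lemma IsCyclic.ncard_orderOf_eq [Fintype G] [IsCyclic G] {d : ℕ} (hd : d ∣ Fintype.card G) :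
    {g : G | orderOf g = d}.ncard = d.totient := by
  classical
  rw [← IsCyclic.card_orderOf_eq_totient hd, Set.ncard_eq_toFinset_card']
  congr 1
  ext
  simp

end Group

namespace powerGraph

variable {G : Type*} [Group G]

lemma orderOf_dvd_or_dvd_of_adj {x y : G} (h : (powerGraph G).Adj x y) :
    orderOf x ∣ orderOf y ∨ orderOf y ∣ orderOf x :=
  h.2.imp orderOf_dvd_of_mem_zpowers orderOf_dvd_of_mem_zpowers

lemma adj_of_orderOf_eq [Fintype G] [IsCyclic G] {x y : G} (hne : x ≠ y)
    (h : orderOf x = orderOf y) : (powerGraph G).Adj x y :=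
  ⟨hne, Or.inl (IsCyclic.mem_zpowers_of_orderOf_dvd h.dvd)⟩

lemma orderOf_eq_of_adj_of_prime {x y : G} (hx : (orderOf x).Prime) (hy : (orderOf y).Prime)
    (h : (powerGraph G).Adj x y) : orderOf x = orderOf y :=
  (orderOf_dvd_or_dvd_of_adj h).elim (Nat.prime_dvd_prime_iff_eq hx hy).mp
    fun hyx ↦ ((Nat.prime_dvd_prime_iff_eq hy hx).mp hyx).symm

end powerGraph

/-- In a cyclic group of order `p * q` (`p ≠ q` primes), the subgraph of the power graph
induced on the non-identity non-generators is disconnected: it is the disjoint union of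
a complete graph on the `p - 1` elements of order `p` and a complete graph on the
`q - 1` elements of order `q`, with no edges between them. -/
theorem power_graph_cyclic_pq_disconnected
    (G : Type*) [Group G] [Fintype G] [IsCyclic G]
    (p q : ℕ) (hp : p.Prime) (hq : q.Prime) (hpq : p ≠ q)
    (hcard : Fintype.card G = p * q) :
    (∀ g ∈ {g : G | g ≠ 1 ∧ Subgroup.zpowers g ≠ ⊤}, orderOf g = p ∨ orderOf g = q) ∧
    Set.ncard {g : G | (g ≠ 1 ∧ Subgroup.zpowers g ≠ ⊤) ∧ orderOf g = p} = p - 1 ∧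
    Set.ncard {g : G | (g ≠ 1 ∧ Subgroup.zpowers g ≠ ⊤) ∧ orderOf g = q} = q - 1 ∧
    (∀ g ∈ {g : G | g ≠ 1 ∧ Subgroup.zpowers g ≠ ⊤},
      ∀ h ∈ {g : G | g ≠ 1 ∧ Subgroup.zpowers g ≠ ⊤},
        g ≠ h → orderOf g = orderOf h → (powerGraph G).Adj g h) ∧
    (∀ g h : G, orderOf g = p → orderOf h = q → ¬ (powerGraph G).Adj g h) ∧
    ¬ ((powerGraph G).induce {g : G | g ≠ 1 ∧ Subgroup.zpowers g ≠ ⊤}).Connected := by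
  have hmem (g : G) : g ≠ 1 ∧ zpowers g ≠ ⊤ ↔ orderOf g = p ∨ orderOf g = q :=
    ne_one_and_zpowers_ne_top_iff_of_card_eq_mul hp hq (Nat.card_eq_fintype_card.trans hcard)
  have hprime (g : G) (hg : g ≠ 1 ∧ zpowers g ≠ ⊤) : (orderOf g).Prime :=
    ((hmem g).mp hg).elim (· ▸ hp) (· ▸ hq)
  have hcount {d : ℕ} (hd : d.Prime) (hdvd : d ∣ p * q) (hd' : d = p ∨ d = q) :
      {g : G | (g ≠ 1 ∧ zpowers g ≠ ⊤) ∧ orderOf g = d}.ncard = d - 1 := by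
    rw [← Nat.totient_prime hd, ← IsCyclic.ncard_orderOf_eq (hcard ▸ hdvd)]
    congr 1
    ext g
    simp only [Set.mem_ofPred_eq, hmem, and_iff_right_iff_imp]
    rintro rfl
    exact hd'
  refine ⟨fun g hg ↦ (hmem g).mp hg, hcount hp (dvd_mul_right p q) (.inl rfl),
    hcount hq (dvd_mul_left q p) (.inr rfl), fun g _ h _ ↦ powerGraph.adj_of_orderOf_eq,
    fun g h hg hh hadj ↦ hpq ?_, fun hconn ↦ ?_⟩
  · rw [← hg, ← hh]
    exact powerGraph.orderOf_eq_of_adj_of_prime (hg ▸ hp) (hh ▸ hq) hadj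
  have : Fact p.Prime := ⟨hp⟩
  have : Fact q.Prime := ⟨hq⟩
  obtain ⟨g, hg⟩ := exists_prime_orderOf_dvd_card p (hcard ▸ dvd_mul_right p q)
  obtain ⟨h, hh⟩ := exists_prime_orderOf_dvd_card q (hcard ▸ dvd_mul_left q p)
  have hreach := hconn.preconnected ⟨g, (hmem g).mpr (.inl hg)⟩ ⟨h, (hmem h).mpr (.inr hh)⟩
  refine hpq (hg ▸ hh ▸ hreach.eq_of_forall_adj_eq (fun x ↦ orderOf x.1) fun x y hxy ↦ ?_)
  exact powerGraph.orderOf_eq_of_adj_of_prime (hprime x x.2) (hprime y y.2) hxy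
end

section
/- Let G be the generalized quaternion group Q_{2^n} of order 2^n (n ≥ 3), and delete from the power graph P(G) the identity and the unique involution of G. The resulting induced graph is the disjoint union of a complete graph on 2^{n-1} − 2 vertices (the remaining elements of the cyclic subgroup of index 2) and 2^{n-2} disjoint edges (each joining an element of order 4 outside that cyclic subgroup to its inverse). -/
open Subgroup

theorem IsCyclic.mem_zpowers_of_orderOf_dvd_s9 {G : Type*} [Group G] [Finite G] [IsCyclic G]
    {x y : G} (h : orderOf x ∣ orderOf y) : x ∈ zpowers y := by
  classical
  have := Fintype.ofFinite G
  -- a cyclic group has at most `k` solutions of `w ^ k = 1`, and `⟨y⟩` already supplies them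
  let roots : Finset G := {w | w ^ orderOf y = 1}
  have hsub : (zpowers y : Set G).toFinset ⊆ roots := fun w hw => by
    simpa [roots] using
      orderOf_dvd_iff_pow_eq_one.1 (orderOf_dvd_of_mem_zpowers (by simpa using hw))
  have hcard : roots.card ≤ (zpowers y : Set G).toFinset.card := by
    rw [Set.toFinset_card, ← Nat.card_eq_fintype_card, SetLike.coe_sort_coe, Nat.card_zpowers]
    exact IsCyclic.card_pow_eq_one_le (orderOf_pos y)
  have hx : x ∈ roots := by simpa [roots] using orderOf_dvd_iff_pow_eq_one.1 h
  rw [← Finset.eq_of_subset_of_card_le hsub hcard] at hx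
  simpa using hx

theorem IsCyclic.mem_zpowers_or_mem_zpowers {G : Type*} [Group G] [Finite G] [IsCyclic G]
    {p k : ℕ} (hp : p.Prime) (hG : Nat.card G = p ^ k) (x y : G) :
    x ∈ zpowers y ∨ y ∈ zpowers x := by
  obtain ⟨i, -, hi⟩ := (Nat.dvd_prime_pow hp).1 (hG ▸ orderOf_dvd_natCard x)
  obtain ⟨j, -, hj⟩ := (Nat.dvd_prime_pow hp).1 (hG ▸ orderOf_dvd_natCard y)
  rcases le_total i j with hij | hji
  · exact .inl (mem_zpowers_of_orderOf_dvd_s9 (by rw [hi, hj]; exact pow_dvd_pow p hij))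
  · exact .inr (mem_zpowers_of_orderOf_dvd_s9 (by rw [hi, hj]; exact pow_dvd_pow p hji))

theorem Subgroup.mem_zpowers_or_mem_zpowers_of_isCyclic {G : Type*} [Group G] [Finite G]
    {C : Subgroup G} [IsCyclic C] {p k : ℕ} (hp : p.Prime) (hC : Nat.card C = p ^ k)
    {x y : G} (hx : x ∈ C) (hy : y ∈ C) : x ∈ zpowers y ∨ y ∈ zpowers x := by
  have coe_mem (u v : C) (h : u ∈ zpowers v) : (u : G) ∈ zpowers (v : G) := by
    simpa [MonoidHom.map_zpowers] using mem_map_of_mem C.subtype h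
  exact (IsCyclic.mem_zpowers_or_mem_zpowers hp hC ⟨x, hx⟩ ⟨y, hy⟩).imp
    (coe_mem _ _) (coe_mem _ _)

theorem Subgroup.ncard_setOf_ne_inter {G : Type*} [Group G] [Finite G] {C : Subgroup G}
    {z : G} (hzC : z ∈ C) (hz1 : z ≠ 1) :
    ({g | g ≠ 1 ∧ g ≠ z} ∩ C : Set G).ncard = Nat.card C - 2 := by
  have hdiff : ({g | g ≠ 1 ∧ g ≠ z} ∩ C : Set G) = (C : Set G) \ {1, z} := by
    ext
    simp [and_comm]
  rw [hdiff, Set.ncard_sdiff (by simp [Set.insert_subset_iff, C.one_mem, hzC]),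
    Set.ncard_pair hz1.symm, ← Nat.card_coe_set_eq, SetLike.coe_sort_coe]

theorem Subgroup.ncard_setOf_notMem {G : Type*} [Group G] [Finite G] (C : Subgroup G) :
    ({g | g ∉ C} : Set G).ncard = Nat.card G - Nat.card C := by
  change ((C : Set G)ᶜ).ncard = _
  rw [Set.ncard_compl, ← Nat.card_coe_set_eq, SetLike.coe_sort_coe]

theorem eq_inv_of_mem_zpowers_of_orderOf_eq_four {G : Type*} [Group G] {g h : G}
    (hg : orderOf g = 4) (hh : h ∈ zpowers g) (h1 : h ≠ 1) (hg1 : h ≠ g) (hg2 : h ≠ g ^ 2) :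
    h = g⁻¹ := by
  classical
  have hfin : IsOfFinOrder g := orderOf_pos_iff.1 (by rw [hg]; norm_num)
  rw [hfin.mem_zpowers_iff_mem_range_orderOf, hg] at hh
  obtain ⟨i, hi, rfl⟩ := Finset.mem_image.1 hh
  rw [Finset.mem_range] at hi
  interval_cases i
  · exact absurd (pow_zero g) h1
  · exact absurd (pow_one g) hg1
  · exact absurd rfl hg2
  · have h4 : g ^ 4 = 1 := hg ▸ pow_orderOf_eq_one g
    exact eq_inv_of_mul_eq_one_left (by rw [← pow_succ]; exact h4)

theorem eq_inv_of_powerGraph_adj {G : Type*} [Group G] [Finite G] {C : Subgroup G}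
    (hC : ∀ g ∉ C, orderOf g = 4) {g h : G} (hg : g ∉ C) (h1 : h ≠ 1) (hg2 : h ≠ g ^ 2)
    (hadj : (powerGraph G).Adj g h) : h = g⁻¹ := by
  obtain ⟨hne, hgh | hhg⟩ := hadj
  · have hh : h ∉ C := fun hh => hg (zpowers_le.2 hh hgh)
    have heq : zpowers g = zpowers h := eq_of_le_of_card_ge (zpowers_le.2 hgh)
      (by rw [Nat.card_zpowers, Nat.card_zpowers, hC g hg, hC h hh])
    exact eq_inv_of_mem_zpowers_of_orderOf_eq_four (hC g hg) (heq ▸ mem_zpowers h) h1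
      hne.symm hg2
  · exact eq_inv_of_mem_zpowers_of_orderOf_eq_four (hC g hg) hhg h1 hne.symm hg2

theorem ZMod.eq_zero_or_eq_of_add_self_eq_zero {m : ℕ} [NeZero m] {i : ZMod (2 * m)}
    (h : i + i = 0) : i = 0 ∨ i = m := by
  have hval := congrArg ZMod.val h
  rw [ZMod.val_add, ZMod.val_zero] at hval
  obtain ⟨k, hk⟩ := Nat.dvd_of_mod_eq_zero hval
  have hlt := ZMod.val_lt i
  have hk2 : k < 2 := by nlinarith
  rcases (show i.val = 0 ∨ i.val = m by interval_cases k <;> omega) with h0 | hm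
  · exact .inl ((ZMod.val_eq_zero i).1 h0)
  · exact .inr (by rw [← ZMod.natCast_zmod_val i, hm])

namespace QuaternionGroup

variable {m : ℕ} [NeZero m]

theorem a_mem_zpowers_a_one (i : ZMod (2 * m)) : a i ∈ zpowers (a 1 : QuaternionGroup m) :=
  mem_zpowers_iff.2 ⟨i.val, by rw [zpow_natCast, a_one_pow, ZMod.natCast_zmod_val]⟩

theorem eq_a_of_orderOf_eq_two {w : QuaternionGroup m} (hw : orderOf w = 2) : w = a m := by
  cases w with
  | a i =>
    have hsq : a i ^ 2 = 1 := orderOf_dvd_iff_pow_eq_one.1 (hw ▸ dvd_rfl)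
    rw [sq, a_mul_a, one_def, a.injEq] at hsq
    rcases ZMod.eq_zero_or_eq_of_add_self_eq_zero hsq with rfl | rfl
    · simp [a_zero] at hw
    · rfl
  | xa i => simp [orderOf_xa] at hw

theorem a_mem_of_two_dvd_card {C : Subgroup (QuaternionGroup m)} (hC : 2 ∣ Nat.card C) :
    a m ∈ C := by
  obtain ⟨x, hx⟩ := exists_prime_orderOf_dvd_card' 2 hC
  rw [← eq_a_of_orderOf_eq_two (w := (x : QuaternionGroup m)) (by rwa [Subgroup.orderOf_coe])]
  exact x.2

theorem card_of_index_eq_two {C : Subgroup (QuaternionGroup m)} (hC : C.index = 2) :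
    Nat.card C = 2 * m := by
  have := C.card_mul_index
  rw [hC, Nat.card_eq_fintype_card (α := QuaternionGroup m), card] at this
  omega

theorem orderOf_dvd_four_of_notMem {C : Subgroup (QuaternionGroup m)} [IsCyclic C]
    (hC : Nat.card C = 2 * m) {g : QuaternionGroup m} (hg : g ∉ C) : orderOf g ∣ 4 := by
  obtain ⟨c, rfl⟩ := (C.isCyclic_iff_exists_zpowers_eq_top).1 ‹_›
  rw [Nat.card_zpowers] at hC
  cases g with
  | xa j => rw [orderOf_xa]
  | a j =>
    cases c with
    | a i =>
      have heq : zpowers (a i) = zpowers (a 1 : QuaternionGroup m) :=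
        eq_of_le_of_card_ge (zpowers_le.2 (a_mem_zpowers_a_one i))
          (by rw [Nat.card_zpowers, Nat.card_zpowers, orderOf_a_one, hC])
      exact absurd (heq ▸ a_mem_zpowers_a_one j) hg
    | xa i =>
      rw [orderOf_xa] at hC
      exact hC ▸ orderOf_a_one (n := m) ▸ orderOf_dvd_of_mem_zpowers (a_mem_zpowers_a_one j)

theorem orderOf_eq_four_of_notMem {C : Subgroup (QuaternionGroup m)} [IsCyclic C]
    (hC : Nat.card C = 2 * m) {g : QuaternionGroup m} (hg : g ∉ C) : orderOf g = 4 := by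
  obtain ⟨k, hk, hgk⟩ := (Nat.dvd_prime_pow Nat.prime_two).1
    (show orderOf g ∣ 2 ^ 2 from orderOf_dvd_four_of_notMem hC hg)
  interval_cases k
  · exact absurd (orderOf_eq_one_iff.1 hgk ▸ C.one_mem) hg
  · exact absurd
      (eq_a_of_orderOf_eq_two hgk ▸ a_mem_of_two_dvd_card (hC ▸ dvd_mul_right 2 m)) hg
  · exact hgk

theorem sq_eq_a_of_notMem {C : Subgroup (QuaternionGroup m)} [IsCyclic C]
    (hC : Nat.card C = 2 * m) {g : QuaternionGroup m} (hg : g ∉ C) : g ^ 2 = a m :=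
  eq_a_of_orderOf_eq_two (by rw [orderOf_pow, orderOf_eq_four_of_notMem hC hg]; rfl)

end QuaternionGroup

theorem power_graph_quaternion_delete_center_general
    (n : ℕ)
    (z : QuaternionGroup (2 ^ (n - 2))) (hz : orderOf z = 2)
    (C : Subgroup (QuaternionGroup (2 ^ (n - 2)))) (hC2 : C.index = 2) (hCcyc : IsCyclic ↥C) :
    -- the remaining elements of C form a complete graph on 2^(n-1) - 2 vertices
    (∀ g ∈ ({g | g ≠ 1 ∧ g ≠ z} ∩ ↑C : Set (QuaternionGroup (2 ^ (n - 2)))),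
      ∀ h ∈ ({g | g ≠ 1 ∧ g ≠ z} ∩ ↑C : Set (QuaternionGroup (2 ^ (n - 2)))),
        g ≠ h → (powerGraph (QuaternionGroup (2 ^ (n - 2)))).Adj g h) ∧
    Set.ncard ({g | g ≠ 1 ∧ g ≠ z} ∩ ↑C : Set (QuaternionGroup (2 ^ (n - 2))))
      = 2 ^ (n - 1) - 2 ∧
    -- the 2 * 2^(n-2) elements outside C pair up into 2^(n-2) disjoint edges
    Set.ncard ({g | g ∉ C} : Set (QuaternionGroup (2 ^ (n - 2)))) = 2 * 2 ^ (n - 2) ∧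
    (∀ g : QuaternionGroup (2 ^ (n - 2)), g ∉ C →
      (g ≠ 1 ∧ g ≠ z) ∧ orderOf g = 4 ∧ g⁻¹ ≠ g ∧ g⁻¹ ∉ C ∧
      (powerGraph (QuaternionGroup (2 ^ (n - 2)))).Adj g g⁻¹ ∧
      ∀ h : QuaternionGroup (2 ^ (n - 2)), h ≠ 1 → h ≠ z →
        (powerGraph (QuaternionGroup (2 ^ (n - 2)))).Adj g h → h = g⁻¹) := by
  open QuaternionGroup in
  have hcard : Nat.card C = 2 * 2 ^ (n - 2) := card_of_index_eq_two hC2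
  obtain rfl := eq_a_of_orderOf_eq_two hz
  have hzC := a_mem_of_two_dvd_card (hcard ▸ dvd_mul_right 2 _)
  have hz1 : a (2 ^ (n - 2) : ℕ) ≠ 1 := fun h => by rw [h, orderOf_one] at hz; omega
  refine ⟨fun g ⟨_, hgC⟩ h ⟨_, hhC⟩ hne => ⟨hne, ?_⟩, ?_, ?_, fun g hg => ?_⟩
  · exact C.mem_zpowers_or_mem_zpowers_of_isCyclic Nat.prime_two (k := n - 2 + 1)
      (by rw [hcard, pow_succ']) hgC hhC
  · rw [C.ncard_setOf_ne_inter hzC hz1, hcard]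
    -- for `n ≤ 1` both sides are `0` by truncated subtraction
    rcases n with _ | _ | n <;> simp [pow_succ']
  · rw [C.ncard_setOf_notMem, hcard, Nat.card_eq_fintype_card, card]
    omega
  · have hg4 := orderOf_eq_four_of_notMem hcard hg
    have hinv : g⁻¹ ≠ g := fun h => by
      have := orderOf_dvd_of_pow_eq_one (sq g ▸ inv_eq_iff_mul_eq_one.1 h)
      rw [hg4] at this
      norm_num at this
    exact ⟨⟨fun h => hg (h ▸ C.one_mem), fun h => hg (h ▸ hzC)⟩, hg4, hinv,
      fun h => hg (C.inv_mem_iff.1 h), ⟨hinv.symm, .inr (inv_mem (mem_zpowers g))⟩,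
      fun h h1 hhz hadj => eq_inv_of_powerGraph_adj (fun _ => orderOf_eq_four_of_notMem hcard)
        hg h1 (sq_eq_a_of_notMem hcard hg ▸ hhz) hadj⟩

/-- Removing the identity and the unique involution `z` from the power graph of the
generalized quaternion group `Q_{2^n}` (`n ≥ 3`) leaves the disjoint union of a complete
graph on the `2^(n-1) - 2` remaining elements of a cyclic subgroup `C` of index `2`,
together with `2^(n-2)` disjoint edges, each joining an element of order `4` outside
`C` to its inverse. -/
theorem power_graph_quaternion_delete_center
    (n : ℕ) (hn : 3 ≤ n)
    (z : QuaternionGroup (2 ^ (n - 2))) (hz : orderOf z = 2)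
    (C : Subgroup (QuaternionGroup (2 ^ (n - 2)))) (hC2 : C.index = 2) (hCcyc : IsCyclic ↥C) :
    -- the remaining elements of C form a complete graph on 2^(n-1) - 2 vertices
    (∀ g ∈ ({g | g ≠ 1 ∧ g ≠ z} ∩ ↑C : Set (QuaternionGroup (2 ^ (n - 2)))),
      ∀ h ∈ ({g | g ≠ 1 ∧ g ≠ z} ∩ ↑C : Set (QuaternionGroup (2 ^ (n - 2)))),
        g ≠ h → (powerGraph (QuaternionGroup (2 ^ (n - 2)))).Adj g h) ∧
    Set.ncard ({g | g ≠ 1 ∧ g ≠ z} ∩ ↑C : Set (QuaternionGroup (2 ^ (n - 2))))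
      = 2 ^ (n - 1) - 2 ∧
    -- the 2 * 2^(n-2) elements outside C pair up into 2^(n-2) disjoint edges
    Set.ncard ({g | g ∉ C} : Set (QuaternionGroup (2 ^ (n - 2)))) = 2 * 2 ^ (n - 2) ∧
    (∀ g : QuaternionGroup (2 ^ (n - 2)), g ∉ C →
      (g ≠ 1 ∧ g ≠ z) ∧ orderOf g = 4 ∧ g⁻¹ ≠ g ∧ g⁻¹ ∉ C ∧
      (powerGraph (QuaternionGroup (2 ^ (n - 2)))).Adj g g⁻¹ ∧
      ∀ h : QuaternionGroup (2 ^ (n - 2)), h ≠ 1 → h ≠ z →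
        (powerGraph (QuaternionGroup (2 ^ (n - 2)))).Adj g h → h = g⁻¹) :=
  power_graph_quaternion_delete_center_general n z hz C hC2 hCcyc
end

section
/- Let G be a torsion-free group such that the proper power graph P*(G) is connected. Then for any two non-identity elements x, y ∈ G, the intersection ⟨x⟩ ∩ ⟨y⟩ is nontrivial. -/
section

open Subgroup

variable {G : Type*} [Group G]

lemma Subgroup.inf_ne_bot_of_le_zpowers {y : G} (hy : ¬IsOfFinOrder y) {H K : Subgroup G}
    (hHy : H ≤ zpowers y) (hKy : K ≤ zpowers y) (hH : H ≠ ⊥) (hK : K ≠ ⊥) : H ⊓ K ≠ ⊥ := by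
  obtain ⟨a, haH, ha⟩ := H.bot_or_exists_ne_one.resolve_left hH
  obtain ⟨b, hbK, hb⟩ := K.bot_or_exists_ne_one.resolve_left hK
  obtain ⟨m, rfl⟩ := mem_zpowers_iff.mp (hHy haH)
  obtain ⟨n, rfl⟩ := mem_zpowers_iff.mp (hKy hbK)
  have hm : m ≠ 0 := by rintro rfl; exact ha (zpow_zero y)
  have hn : n ≠ 0 := by rintro rfl; exact hb (zpow_zero y)
  have h_ne_one : y ^ (m * n) ≠ 1 := fun h =>
    mul_ne_zero hm hn (injective_zpow_iff_not_isOfFinOrder.mpr hy (h.trans (zpow_zero y).symm))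
  refine ne_bot_iff_exists_ne_one.mpr ⟨⟨y ^ (m * n), mem_inf.mpr ⟨?_, ?_⟩⟩, ?_⟩
  · rw [zpow_mul]; exact zpow_mem haH n
  · rw [mul_comm, zpow_mul]; exact zpow_mem hbK m
  · exact fun h => h_ne_one (congrArg Subtype.val h)

lemma zpowers_inf_zpowers_ne_bot_trans {x y z : G} (hy : ¬IsOfFinOrder y)
    (hxy : zpowers x ⊓ zpowers y ≠ ⊥) (hyz : zpowers y ⊓ zpowers z ≠ ⊥) :
    zpowers x ⊓ zpowers z ≠ ⊥ :=
  ne_bot_of_le_ne_bot (inf_ne_bot_of_le_zpowers hy inf_le_right inf_le_left hxy hyz)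
    (le_inf (inf_le_left.trans inf_le_left) (inf_le_right.trans inf_le_right))

lemma zpowers_inf_zpowers_ne_bot_of_adj {x y : G} (hx : x ≠ 1) (hy : y ≠ 1)
    (hxy : (powerGraph G).Adj x y) : zpowers x ⊓ zpowers y ≠ ⊥ := by
  rcases hxy.2 with hx_mem | hy_mem
  · rwa [inf_eq_left.mpr (zpowers_le.mpr hx_mem), zpowers_ne_bot]
  · rwa [inf_eq_right.mpr (zpowers_le.mpr hy_mem), zpowers_ne_bot]

lemma zpowers_inf_zpowers_ne_bot_of_reachable (htf : ∀ g : G, g ≠ 1 → ¬IsOfFinOrder g)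
    {x y : {g : G | g ≠ 1}} (hxy : ((powerGraph G).induce {g : G | g ≠ 1}).Reachable x y) :
    zpowers (x : G) ⊓ zpowers (y : G) ≠ ⊥ := by
  obtain ⟨w⟩ := hxy
  induction w with
  | @nil u => rw [inf_idem, zpowers_ne_bot]; exact u.2
  | @cons u v _ hadj _ ih =>
    exact zpowers_inf_zpowers_ne_bot_trans (htf v v.2)
      (zpowers_inf_zpowers_ne_bot_of_adj u.2 v.2 hadj) ih

end

/-- If `G` is torsion-free and its proper power graph is connected, then any two
nontrivial cyclic subgroups intersect nontrivially. -/
theorem zpowers_inter_nontrivial_of_proper_power_graph_connected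
    (G : Type*) [Group G]
    (htf : ∀ g : G, g ≠ 1 → ¬ IsOfFinOrder g)
    (h : ((powerGraph G).induce {g : G | g ≠ 1}).Connected) :
    ∀ x y : G, x ≠ 1 → y ≠ 1 →
      Subgroup.zpowers x ⊓ Subgroup.zpowers y ≠ ⊥ :=
  fun x y hx hy => zpowers_inf_zpowers_ne_bot_of_reachable htf (h.preconnected ⟨x, hx⟩ ⟨y, hy⟩)
end

section
/- Let G be a torsion-free group that is locally center-by-finite, i.e. every finitely generated subgroup H of G has center of finite index in H. If the proper power graph P*(G) is connected, then G is abelian. -/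
open Subgroup

theorem MonoidHom.transferCenterPow_injective {G : Type*} [Group G] [(center G).FiniteIndex]
    (htf : ∀ g : G, g ≠ 1 → ¬ IsOfFinOrder g) :
    Function.Injective (MonoidHom.transferCenterPow G) := by
  refine (injective_iff_map_eq_one _).mpr fun g hg => ?_
  by_contra hne
  have hpow : g ^ (center G).index = 1 := by
    rw [← MonoidHom.transferCenterPow_apply, hg, OneMemClass.coe_one]
  exact htf g hne <| isOfFinOrder_iff_pow_eq_one.mpr
    ⟨_, Nat.pos_of_ne_zero FiniteIndex.index_ne_zero, hpow⟩

theorem mul_comm_of_finiteIndex_center {G : Type*} [Group G] [(center G).FiniteIndex]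
    (htf : ∀ g : G, g ≠ 1 → ¬ IsOfFinOrder g) (x y : G) : x * y = y * x := by
  apply MonoidHom.transferCenterPow_injective htf
  rw [map_mul, map_mul]
  exact Subtype.ext (mem_center_iff.mp (MonoidHom.transferCenterPow G y).2 _)

theorem abelian_of_proper_power_graph_connected_general
    (G : Type*) [Group G]
    (htf : ∀ g : G, g ≠ 1 → ¬ IsOfFinOrder g)
    (hlcf : ∀ H : Subgroup G, H.FG → (Subgroup.center ↥H).FiniteIndex) :
    ∀ a b : G, a * b = b * a := by
  classical
  intro a b
  set H : Subgroup G := closure {a, b}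
  have : (center H).FiniteIndex := hlcf H ⟨{a, b}, by simp [H]⟩
  have ha : a ∈ H := subset_closure (by simp)
  have hb : b ∈ H := subset_closure (by simp)
  have htfH : ∀ g : H, g ≠ 1 → ¬ IsOfFinOrder g := fun g hg hfin =>
    htf g (by simpa using hg) (H.subtype.isOfFinOrder hfin)
  simpa using congrArg Subtype.val (mul_comm_of_finiteIndex_center htfH ⟨a, ha⟩ ⟨b, hb⟩)

/-- A torsion-free, locally center-by-finite group with connected proper power graph
is abelian. -/
theorem abelian_of_proper_power_graph_connected
    (G : Type*) [Group G]
    (htf : ∀ g : G, g ≠ 1 → ¬ IsOfFinOrder g)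
    (hlcf : ∀ H : Subgroup G, H.FG → (Subgroup.center ↥H).FiniteIndex)
    (h : ((powerGraph G).induce {g : G | g ≠ 1}).Connected) :
    ∀ a b : G, a * b = b * a :=
  abelian_of_proper_power_graph_connected_general G htf hlcf
end

section
/- Let G be a periodic group (every element has finite order) whose center Z(G) contains elements of two distinct prime orders p and q. Then the proper power graph P*(G) is connected. -/
/-!
For commuting `a`, `b` of coprime orders, both `a` and `b` are powers of `a * b` (which is then
nontrivial), so `a — a * b — b` is a path in `P*(G)`. Every nontrivial `g` has a power `h` of
some prime order `r`; as `x` and `y` are central, `h` commutes with both, and `r` is coprime to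
`p` or to `q`. So `g — h` joins `x` or `y`, and `x — x * y — y` joins those two.
-/

open Subgroup

abbrev properPowerGraph (G : Type*) [Group G] : SimpleGraph {g : G | g ≠ 1} :=
  (powerGraph G).induce {g : G | g ≠ 1}

section

variable {G : Type*} [Group G]

theorem ne_one_of_prime_orderOf {g : G} (hg : (orderOf g).Prime) : g ≠ 1 :=
  mt orderOf_eq_one_iff.mpr hg.ne_one

theorem Commute.mem_zpowers_mul_of_coprime {a b : G} (hab : Commute a b)
    (hcop : (orderOf a).Coprime (orderOf b)) : a ∈ zpowers (a * b) := by
  have hpow : (a * b) ^ orderOf b = a ^ orderOf b := by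
    rw [hab.mul_pow, pow_orderOf_eq_one, mul_one]
  obtain ⟨m, hm⟩ := exists_pow_eq_self_of_coprime hcop.symm
  have hpow_eq : (a * b) ^ (orderOf b * m) = a := by rw [pow_mul, hpow, hm]
  exact mem_zpowers_iff.mpr ⟨(orderOf b * m : ℕ), by rwa [zpow_natCast]⟩

theorem properPowerGraph_reachable_of_mem_zpowers {a b : G} (ha : a ≠ 1) (hb : b ≠ 1)
    (hba : b ∈ zpowers a) : (properPowerGraph G).Reachable ⟨a, ha⟩ ⟨b, hb⟩ := by
  by_cases hab : a = b
  · subst hab; rfl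
  · exact SimpleGraph.Adj.reachable (G := properPowerGraph G) ⟨hab, Or.inr hba⟩

theorem properPowerGraph_reachable_of_commute_of_coprime {a b : G} (ha : a ≠ 1) (hb : b ≠ 1)
    (hab : Commute a b) (hcop : (orderOf a).Coprime (orderOf b)) :
    (properPowerGraph G).Reachable ⟨a, ha⟩ ⟨b, hb⟩ := by
  have ha_mem : a ∈ zpowers (a * b) := hab.mem_zpowers_mul_of_coprime hcop
  have hb_mem : b ∈ zpowers (a * b) := hab.eq ▸ hab.symm.mem_zpowers_mul_of_coprime hcop.symm
  have hab1 : a * b ≠ 1 := fun h => ha (by simpa [h] using ha_mem)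
  exact (properPowerGraph_reachable_of_mem_zpowers hab1 ha ha_mem).symm.trans
    (properPowerGraph_reachable_of_mem_zpowers hab1 hb hb_mem)

theorem IsOfFinOrder.exists_prime_orderOf_mem_zpowers {g : G} (hg : IsOfFinOrder g)
    (hg1 : g ≠ 1) : ∃ h ∈ zpowers g, (orderOf h).Prime := by
  have hr : (orderOf g).minFac.Prime := Nat.minFac_prime (mt orderOf_eq_one_iff.mp hg1)
  refine ⟨g ^ (orderOf g / (orderOf g).minFac), pow_mem (mem_zpowers g) _, ?_⟩
  rwa [orderOf_pow_orderOf_div hg.orderOf_pos.ne' (Nat.minFac_dvd _)]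

theorem properPowerGraph_reachable_of_prime_orderOf_of_mem_center {h x y : G} (hh : h ≠ 1)
    (hx1 : x ≠ 1) (hh_prime : (orderOf h).Prime) (hx_prime : (orderOf x).Prime)
    (hy_prime : (orderOf y).Prime) (hxy : orderOf x ≠ orderOf y)
    (hx : x ∈ center G) (hy : y ∈ center G) :
    (properPowerGraph G).Reachable ⟨h, hh⟩ ⟨x, hx1⟩ := by
  have hy1 : y ≠ 1 := ne_one_of_prime_orderOf hy_prime
  have hxy_reach := properPowerGraph_reachable_of_commute_of_coprime hx1 hy1
    (mem_center_iff.mp hy x) ((Nat.coprime_primes hx_prime hy_prime).mpr hxy)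
  by_cases hhx : orderOf h = orderOf x
  · refine (properPowerGraph_reachable_of_commute_of_coprime hh hy1 (mem_center_iff.mp hy h)
      ?_).trans hxy_reach.symm
    rwa [hhx, Nat.coprime_primes hx_prime hy_prime]
  · exact properPowerGraph_reachable_of_commute_of_coprime hh hx1 (mem_center_iff.mp hx h)
      ((Nat.coprime_primes hh_prime hx_prime).mpr hhx)

end

/-- If `G` is periodic and its center contains elements of two distinct prime orders,
then the proper power graph of `G` is connected. -/
theorem proper_power_graph_connected_of_center_two_primes
    (G : Type*) [Group G]
    (hper : ∀ g : G, IsOfFinOrder g)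
    (p q : ℕ) (hp : p.Prime) (hq : q.Prime) (hpq : p ≠ q)
    (x y : G) (hx : x ∈ Subgroup.center G) (hy : y ∈ Subgroup.center G)
    (hxo : orderOf x = p) (hyo : orderOf y = q) :
    ((powerGraph G).induce {g : G | g ≠ 1}).Connected := by
  subst hxo hyo
  have hx1 : x ≠ 1 := ne_one_of_prime_orderOf hp
  have reach_x (g : {g : G | g ≠ 1}) : (properPowerGraph G).Reachable g ⟨x, hx1⟩ := by
    obtain ⟨h, hh_mem, hh_prime⟩ := (hper g).exists_prime_orderOf_mem_zpowers g.2
    have hh : h ≠ 1 := ne_one_of_prime_orderOf hh_prime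
    exact (properPowerGraph_reachable_of_mem_zpowers g.2 hh hh_mem).trans
      (properPowerGraph_reachable_of_prime_orderOf_of_mem_center hh hx1 hh_prime hp hq hpq
        hx hy)
  have : Nonempty {g : G | g ≠ 1} := ⟨⟨x, hx1⟩⟩
  exact ⟨fun u v => (reach_x u).trans (reach_x v).symm⟩
end

section
/- Let p be a prime and let G be a nontrivial p-group, i.e. a group in which every element has order a power of p. Then the proper power graph P*(G) is connected if and only if G has exactly one subgroup of order p. -/
open Subgroup

section

variable {G : Type*} [Group G] {p : ℕ}

/-- When `orderOf x = p ^ k` with `k ≥ 1`, this is the unique subgroup of order `p` of `⟨x⟩`. -/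
noncomputable def cyclicSocle (p : ℕ) (x : G) : Subgroup G :=
  zpowers (x ^ (orderOf x / p))

lemma cyclicSocle_le_zpowers (x : G) : cyclicSocle p x ≤ zpowers x :=
  zpowers_le.mpr (pow_mem (mem_zpowers x) _)

lemma card_cyclicSocle {x : G} (hx : orderOf x ≠ 0) (hpx : p ∣ orderOf x) :
    Nat.card (cyclicSocle p x) = p := by
  rw [cyclicSocle, Nat.card_zpowers, orderOf_pow_orderOf_div hx hpx]

lemma mem_cyclicSocle_of_pow_eq_one {x z : G} (hx : orderOf x ≠ 0) (hpx : p ∣ orderOf x)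
    (hz : z ∈ zpowers x) (hzp : z ^ p = 1) : z ∈ cyclicSocle p x := by
  obtain ⟨m, rfl⟩ := mem_zpowers_iff.mp hz
  have hp : (p : ℤ) ≠ 0 := by exact_mod_cast ne_zero_of_dvd_ne_zero hx hpx
  have hord : ((orderOf x / p : ℕ) : ℤ) * p ∣ m * p := by
    rw [← Nat.cast_mul, Nat.div_mul_cancel hpx, orderOf_dvd_iff_zpow_eq_one, zpow_mul,
      zpow_natCast, hzp]
  obtain ⟨c, rfl⟩ := (mul_dvd_mul_iff_right hp).mp hord
  rw [zpow_mul, zpow_natCast]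
  exact zpow_mem (mem_zpowers _) c

lemma eq_cyclicSocle_of_le_zpowers {x : G} {H : Subgroup G} (hx : orderOf x ≠ 0)
    (hpx : p ∣ orderOf x) (hH : H ≤ zpowers x) (hHp : Nat.card H = p) :
    H = cyclicSocle p x := by
  have hle : H ≤ cyclicSocle p x := fun h hh =>
    mem_cyclicSocle_of_pow_eq_one hx hpx (hH hh) (by
      simpa [hHp] using congrArg Subtype.val (pow_card_eq_one' (x := (⟨h, hh⟩ : H))))
  have : Finite (cyclicSocle p x) := Nat.finite_of_card_ne_zero (by
    rw [card_cyclicSocle hx hpx]; exact ne_zero_of_dvd_ne_zero hx hpx)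
  exact eq_of_le_of_card_ge hle (by rw [hHp, card_cyclicSocle hx hpx])

lemma cyclicSocle_eq_of_card_eq_prime (hp : p.Prime) {K : Subgroup G} (hK : Nat.card K = p)
    {z : G} (hzK : z ∈ K) (hz : z ≠ 1) : cyclicSocle p z = K := by
  have hzp : orderOf z = p :=
    ((Nat.dvd_prime hp).mp (hK ▸ K.orderOf_dvd_natCard hzK)).resolve_left
      (by rwa [orderOf_eq_one_iff])
  have : Finite K := Nat.finite_of_card_ne_zero (hK ▸ hp.ne_zero)
  rw [cyclicSocle, hzp, Nat.div_self hp.pos, pow_one]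
  exact eq_of_le_of_card_ge (zpowers_le.mpr hzK) (by rw [hK, Nat.card_zpowers, hzp])

lemma exists_cyclicSocle_eq_of_card_eq_prime (hp : p.Prime) {K : Subgroup G}
    (hK : Nat.card K = p) : ∃ z ∈ K, z ≠ 1 ∧ cyclicSocle p z = K := by
  obtain rfl | ⟨z, hzK, hz⟩ := K.bot_or_exists_ne_one
  · exact absurd (by simpa using hK) hp.one_lt.ne
  exact ⟨z, hzK, hz, cyclicSocle_eq_of_card_eq_prime hp hK hzK hz⟩

namespace IsPGroup

variable [Fact p.Prime]

lemma orderOf_ne_zero (hG : IsPGroup p G) (x : G) : orderOf x ≠ 0 :=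
  (hG.isOfFinOrder (Fact.out : p.Prime).ne_zero x).orderOf_pos.ne'

lemma card_cyclicSocle (hG : IsPGroup p G) {x : G} (hx : x ≠ 1) :
    Nat.card (cyclicSocle p x) = p :=
  _root_.card_cyclicSocle (hG.orderOf_ne_zero x) (hG.dvd_orderOf hx)

lemma cyclicSocle_eq_of_mem_zpowers (hG : IsPGroup p G) {x y : G} (hy : y ≠ 1)
    (hyx : y ∈ zpowers x) : cyclicSocle p y = cyclicSocle p x := by
  have hx : x ≠ 1 := by rintro rfl; simp_all
  exact eq_cyclicSocle_of_le_zpowers (hG.orderOf_ne_zero x) (hG.dvd_orderOf hx)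
    ((cyclicSocle_le_zpowers y).trans (zpowers_le.mpr hyx)) (hG.card_cyclicSocle hy)

lemma cyclicSocle_eq_of_reachable (hG : IsPGroup p G) {a b : {g : G | g ≠ 1}}
    (hab : ((powerGraph G).induce {g : G | g ≠ 1}).Reachable a b) :
    cyclicSocle p a.1 = cyclicSocle p b.1 := by
  obtain ⟨w⟩ := hab
  induction w with
  | nil => rfl
  | @cons a b _ hadj _ ih =>
    refine Eq.trans ?_ ih
    obtain ⟨-, hab | hba⟩ := (hadj : (powerGraph G).Adj a b)
    · exact hG.cyclicSocle_eq_of_mem_zpowers a.2 hab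
    · exact (hG.cyclicSocle_eq_of_mem_zpowers b.2 hba).symm

end IsPGroup

end

theorem proper_power_graph_connected_iff_unique_subgroup_of_order_p_general
    (p : ℕ) (hp : p.Prime) (G : Type*) [Group G]
    (hG : IsPGroup p G) :
    ((powerGraph G).induce {g : G | g ≠ 1}).Connected ↔
      ∃! K : Subgroup G, Nat.card ↥K = p := by
  have := Fact.mk hp
  constructor
  · intro hconn
    obtain ⟨g⟩ := hconn.nonempty
    refine ⟨cyclicSocle p g.1, hG.card_cyclicSocle g.2, fun K hK => ?_⟩
    obtain ⟨z, -, hz, rfl⟩ := exists_cyclicSocle_eq_of_card_eq_prime hp hK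
    exact hG.cyclicSocle_eq_of_reachable (hconn ⟨z, hz⟩ g)
  · rintro ⟨K, hK, huniq⟩
    obtain ⟨z, hzK, hz, -⟩ := exists_cyclicSocle_eq_of_card_eq_prime hp hK
    rw [SimpleGraph.connected_iff_exists_forall_reachable]
    refine ⟨⟨z, hz⟩, fun x => ?_⟩
    by_cases hxz : x = ⟨z, hz⟩
    · rw [hxz]
    have hzx : z ∈ zpowers x.1 := cyclicSocle_le_zpowers x.1 <| by
      rwa [huniq _ (hG.card_cyclicSocle x.2)]
    exact SimpleGraph.Adj.reachable
      (show (powerGraph G).Adj z x from ⟨fun h => hxz (Subtype.ext h.symm), Or.inl hzx⟩)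

/-- For a nontrivial `p`-group `G`, the proper power graph is connected iff `G` has
exactly one subgroup of order `p`. -/
theorem proper_power_graph_connected_iff_unique_subgroup_of_order_p
    (p : ℕ) (hp : p.Prime) (G : Type*) [Group G] [Nontrivial G]
    (hG : IsPGroup p G) :
    ((powerGraph G).induce {g : G | g ≠ 1}).Connected ↔
      ∃! K : Subgroup G, Nat.card ↥K = p :=
  proper_power_graph_connected_iff_unique_subgroup_of_order_p_general p hp G hG
end
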